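/- arXiv:1607.04001 — 3 statements merged into one kernel-verified Lean document; each statement's English description precedes it below -/
import Mathlib

section
/- Let m, n ≥ 1 and let H₁ and H₂ be hamiltonian paths in the m×n projective checkerboard B(m,n) that have the same initial square and the same terminal square, and such that for every non-terminal diagonal D, D travels east in H₁ if and only if D travels east in H₂. Then H₁ = H₂ (they consist of exactly the same edges). -/
/-!
Walking southeast through a diagonal (`nextSE`), the east neighbour of a square is the north
neighbour of the next square, and these two squares are its only in-neighbours. So if a square
travels east, the next square cannot travel north; away from the terminal diagonal it must then
travel east too, and the whole diagonal travels east: there the hypothesis fixes the directions.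
On the terminal diagonal, walking back from `τ`, a square travels east exactly when its east
neighbour is not `ι` and the next square does not travel north, which by induction is the same
in both paths. Two paths from `ι` leaving every square in the same direction coincide.
-/

namespace ProjBoard

/-- `(p,q)` is a square of the `m × n` board. -/
def Sq (m n : ℕ) (s : ℕ × ℕ) : Prop := s.1 < m ∧ s.2 < n

/-- The east move on the `m × n` projective checkerboard. -/
def moveE (m n : ℕ) (s : ℕ × ℕ) : ℕ × ℕ :=
  if s.1 < m - 1 then (s.1 + 1, s.2) else (0, n - 1 - s.2)

/-- The north move on the `m × n` projective checkerboard. -/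
def moveN (m n : ℕ) (s : ℕ × ℕ) : ℕ × ℕ :=
  if s.2 < n - 1 then (s.1, s.2 + 1) else (m - 1 - s.1, 0)

/-- Directed edge of the board: from a square `s` to `sE` or `sN`. -/
def Edge (m n : ℕ) (s t : ℕ × ℕ) : Prop :=
  Sq m n s ∧ (t = moveE m n s ∨ t = moveN m n s)

/-- A hamiltonian path, recorded as the list of squares it visits in order. -/
def IsHamPath (m n : ℕ) (l : List (ℕ × ℕ)) : Prop :=
  l.Chain' (Edge m n) ∧ l.Nodup ∧ ∀ s, Sq m n s ↔ s ∈ l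

/-- A hamiltonian path with initial square `ι` and terminal square `τ`. -/
def HamPathFromTo (m n : ℕ) (ι τ : ℕ × ℕ) (l : List (ℕ × ℕ)) : Prop :=
  IsHamPath m n l ∧ l.head? = some ι ∧ l.getLast? = some τ

/-- The square `s` travels east in the hamiltonian path `l`:
the edge from `s` to `sE` belongs to `l`. -/
def TravelsEast (m n : ℕ) (l : List (ℕ × ℕ)) (s : ℕ × ℕ) : Prop :=
  ∃ i : ℕ, l[i]? = some s ∧ l[i + 1]? = some (moveE m n s)

/-- The square `s` travels north in the hamiltonian path `l`:
the edge from `s` to `sN` belongs to `l`. -/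
def TravelsNorth (m n : ℕ) (l : List (ℕ × ℕ)) (s : ℕ × ℕ) : Prop :=
  ∃ i : ℕ, l[i]? = some s ∧ l[i + 1]? = some (moveN m n s)

/-- Two squares lie in the same (direction-forcing) diagonal. -/
def SameDiag (m n : ℕ) (s t : ℕ × ℕ) : Prop :=
  s.1 + s.2 = t.1 + t.2 ∨ s.1 + s.2 + (t.1 + t.2) = m + n - 3

/-- The southeasternmost square of the subdiagonal `S_b`. -/
def tauPlus (m n b : ℕ) : ℕ × ℕ :=
  if b ≤ m - 1 then (b, 0) else (m - 1, b - (m - 1))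


section Succ
variable {α : Type*} {l l₁ l₂ : List α} {a b c : α}

def Succ (l : List α) (a b : α) : Prop :=
  ∃ i : ℕ, l[i]? = some a ∧ l[i + 1]? = some b

lemma Succ.mem_left (h : Succ l a b) : a ∈ l :=
  let ⟨i, hi, _⟩ := h
  List.mem_iff_getElem?.2 ⟨i, hi⟩

lemma Succ.rel {R : α → α → Prop} (hR : l.IsChain R) (h : Succ l a b) : R a b := by
  obtain ⟨i, hi, hi'⟩ := h
  obtain ⟨hlt, rfl⟩ := List.getElem?_eq_some_iff.1 hi'
  obtain ⟨_, rfl⟩ := List.getElem?_eq_some_iff.1 hi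
  exact List.isChain_iff_getElem.1 hR i hlt

lemma index_eq_of_nodup (nd : l.Nodup) {i j : ℕ} (hi : l[i]? = some a) (hj : l[j]? = some a) :
    i = j :=
  (List.getElem?_inj (List.getElem?_eq_some_iff.1 hi).1 nd).1 (hi.trans hj.symm)

lemma Succ.right_unique (nd : l.Nodup) (h : Succ l a b) (h' : Succ l a c) : b = c := by
  obtain ⟨i, hi, hi'⟩ := h
  obtain ⟨j, hj, hj'⟩ := h'
  obtain rfl := index_eq_of_nodup nd hi hj
  exact Option.some.inj (hi'.symm.trans hj')

lemma Succ.left_unique (nd : l.Nodup) (h : Succ l a c) (h' : Succ l b c) : a = b := by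
  obtain ⟨i, hi, hi'⟩ := h
  obtain ⟨j, hj, hj'⟩ := h'
  obtain rfl : i = j := Nat.succ_injective (index_eq_of_nodup nd hi' hj')
  exact Option.some.inj (hi.symm.trans hj)

lemma not_succ_of_getLast? (nd : l.Nodup) (h : l.getLast? = some a) : ¬ Succ l a b := by
  rintro ⟨i, hi, hi'⟩
  rw [List.getLast?_eq_getElem?] at h
  have := (List.getElem?_eq_some_iff.1 hi').1
  have := index_eq_of_nodup nd hi h
  omega

lemma not_succ_of_head? (nd : l.Nodup) (h : l.head? = some b) : ¬ Succ l a b := by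
  rintro ⟨i, -, hi'⟩
  rw [List.head?_eq_getElem?] at h
  exact Nat.succ_ne_zero i (index_eq_of_nodup nd hi' h)

lemma exists_succ (ha : a ∈ l) (h : l.getLast? ≠ some a) : ∃ b, Succ l a b := by
  obtain ⟨i, hi⟩ := List.mem_iff_getElem?.1 ha
  have hlt : i + 1 < l.length := by
    obtain ⟨hlt, -⟩ := List.getElem?_eq_some_iff.1 hi
    by_contra! hle
    rw [List.getLast?_eq_getElem?, show l.length - 1 = i by omega] at h
    exact h hi
  exact ⟨l[i + 1], i, hi, List.getElem?_eq_getElem hlt⟩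

lemma exists_pred (hb : b ∈ l) (h : l.head? ≠ some b) : ∃ a, Succ l a b := by
  obtain ⟨_ | i, hi⟩ := List.mem_iff_getElem?.1 hb
  · exact absurd (List.head?_eq_getElem? ▸ hi) h
  · have hlt : i < l.length := by
      have := (List.getElem?_eq_some_iff.1 hi).1
      omega
    exact ⟨l[i], i, List.getElem?_eq_getElem hlt, hi⟩

lemma getElem?_succ_eq_of_succ_imp (nd₂ : l₂.Nodup)
    (hsucc : ∀ a b, Succ l₁ a b → Succ l₂ a b) {k : ℕ} (hk : l₁[k]? = l₂[k]?)
    (hb : l₁[k + 1]? = some b) : l₂[k + 1]? = some b := by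
  have hlt : k < l₁.length := by
    have := (List.getElem?_eq_some_iff.1 hb).1
    omega
  have hk₁ : l₁[k]? = some l₁[k] := List.getElem?_eq_getElem hlt
  obtain ⟨j, hj, hj'⟩ := hsucc _ _ ⟨k, hk₁, hb⟩
  obtain rfl := index_eq_of_nodup nd₂ hj (hk ▸ hk₁)
  exact hj'

lemma eq_of_succ_iff (nd₁ : l₁.Nodup) (nd₂ : l₂.Nodup) (hhead : l₁.head? = l₂.head?)
    (hsucc : ∀ a b, Succ l₁ a b ↔ Succ l₂ a b) : l₁ = l₂ := by
  refine List.ext_getElem? fun k => ?_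
  induction k with
  | zero => simpa only [List.head?_eq_getElem?] using hhead
  | succ k ih =>
    exact Option.ext fun b =>
      ⟨getElem?_succ_eq_of_succ_imp nd₂ (fun a b => (hsucc a b).1) ih,
        getElem?_succ_eq_of_succ_imp nd₁ (fun a b => (hsucc a b).2) ih.symm⟩

end Succ

section Diagonal
variable {m n : ℕ} {s t u : ℕ × ℕ} {l : List (ℕ × ℕ)}

lemma sq_moveE (hs : Sq m n s) : Sq m n (moveE m n s) := by
  obtain ⟨h1, h2⟩ := hs
  unfold moveE; split <;> exact ⟨by omega, by omega⟩

lemma moveE_injOn (hs : Sq m n s) (ht : Sq m n t) (h : moveE m n s = moveE m n t) : s = t := by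
  obtain ⟨p, q⟩ := s; obtain ⟨p', q'⟩ := t
  obtain ⟨h1, h2⟩ := hs; obtain ⟨h3, h4⟩ := ht
  simp only [moveE] at h
  split_ifs at h <;> simp only [Prod.mk.injEq] at h ⊢ <;> omega

lemma moveN_injOn (hs : Sq m n s) (ht : Sq m n t) (h : moveN m n s = moveN m n t) : s = t := by
  obtain ⟨p, q⟩ := s; obtain ⟨p', q'⟩ := t
  obtain ⟨h1, h2⟩ := hs; obtain ⟨h3, h4⟩ := ht
  simp only [moveN] at h
  split_ifs at h <;> simp only [Prod.mk.injEq] at h ⊢ <;> omega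

lemma SameDiag.symm (h : SameDiag m n s t) : SameDiag m n t s := by
  unfold SameDiag at *; omega

lemma SameDiag.trans (h₁ : SameDiag m n s t) (h₂ : SameDiag m n t u) : SameDiag m n s u := by
  unfold SameDiag at *; omega

lemma eq_corner_of_sameDiag (hs : Sq m n s) (h : SameDiag m n s (m - 1, n - 1)) :
    s = (m - 1, n - 1) := by
  obtain ⟨p, q⟩ := s; obtain ⟨h1, h2⟩ := hs
  unfold SameDiag at h
  simp only [Prod.mk.injEq]
  omega

/-- Walking southeast through a diagonal: along a subdiagonal, then from the southeast end of
one subdiagonal to the northwest end of the other. The corner `(m - 1, n - 1)` is fixed. -/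
def nextSE (m n : ℕ) (s : ℕ × ℕ) : ℕ × ℕ :=
  if s.1 + 1 < m ∧ 0 < s.2 then (s.1 + 1, s.2 - 1)
  else if s.1 + 1 < m then (m - 2 - s.1, n - 1)
  else if s.2 + 1 < n then (0, n - 2 - s.2)
  else s

lemma sq_nextSE (hs : Sq m n s) : Sq m n (nextSE m n s) := by
  obtain ⟨h1, h2⟩ := hs
  unfold nextSE; split_ifs <;> exact ⟨by omega, by omega⟩

lemma sameDiag_nextSE (hs : Sq m n s) : SameDiag m n s (nextSE m n s) := by
  obtain ⟨p, q⟩ := s; obtain ⟨h1, h2⟩ := hs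
  unfold nextSE SameDiag
  split_ifs <;> dsimp only <;> omega

lemma moveN_nextSE (hs : Sq m n s) : moveN m n (nextSE m n s) = moveE m n s := by
  obtain ⟨p, q⟩ := s; obtain ⟨h1, h2⟩ := hs
  unfold nextSE moveN moveE
  split_ifs <;> simp only [Prod.mk.injEq, true_and] <;> omega

lemma travelsNorth_nextSE_iff (hs : Sq m n s) :
    TravelsNorth m n l (nextSE m n s) ↔ Succ l (nextSE m n s) (moveE m n s) := by
  rw [← moveN_nextSE hs]
  rfl

lemma sq_sameDiag_iterate_nextSE (hs : Sq m n s) (k : ℕ) :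
    Sq m n ((nextSE m n)^[k] s) ∧ SameDiag m n s ((nextSE m n)^[k] s) := by
  induction k with
  | zero => exact ⟨hs, Or.inl rfl⟩
  | succ k ih =>
    rw [Function.iterate_succ_apply']
    exact ⟨sq_nextSE ih.1, ih.2.trans (sameDiag_nextSE ih.1)⟩

lemma iterate_nextSE_of_le {p q r : ℕ} (hp : p + r < m) (hq : r ≤ q) :
    (nextSE m n)^[r] (p, q) = (p + r, q - r) := by
  induction r generalizing p q with
  | zero => rfl
  | succ r ih =>
    have hstep : nextSE m n (p, q) = (p + 1, q - 1) := if_pos ⟨by omega, by omega⟩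
    rw [Function.iterate_succ_apply, hstep, ih (by omega) (by omega)]
    simp only [Prod.mk.injEq]; omega

/-- The northwest end of the subdiagonal `S_j`. -/
def nwEnd (n j : ℕ) : ℕ × ℕ := (j - (n - 1), min j (n - 1))

lemma nwEnd_fst_add_snd (j : ℕ) : (nwEnd n j).1 + (nwEnd n j).2 = j := by
  simp only [nwEnd]; omega

lemma exists_iterate_nwEnd_eq (ht : Sq m n t) :
    ∃ r, (nextSE m n)^[r] (nwEnd n (t.1 + t.2)) = t := by
  obtain ⟨p, q⟩ := t; obtain ⟨h1, h2⟩ := ht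
  refine ⟨p - (p + q - (n - 1)), ?_⟩
  rw [nwEnd, iterate_nextSE_of_le (by omega) (by omega)]
  simp only [Prod.mk.injEq]; omega

lemma exists_iterate_eq_nwEnd (hs : Sq m n s) (hc : s ≠ (m - 1, n - 1)) :
    ∃ k, (nextSE m n)^[k] s = nwEnd n (m + n - 3 - (s.1 + s.2)) := by
  obtain ⟨p, q⟩ := s; obtain ⟨h1, h2⟩ := hs
  simp only [ne_eq, Prod.mk.injEq, not_and] at hc
  -- walk to the southeast end of the subdiagonal of `s`, then jump to the other one
  refine ⟨min (p + q) (m - 1) - p + 1, ?_⟩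
  rw [Function.iterate_succ_apply', iterate_nextSE_of_le (by omega) (by omega)]
  unfold nextSE nwEnd
  split_ifs <;> simp only [Prod.mk.injEq] <;> omega

lemma exists_iterate_nextSE_eq (hs : Sq m n s) (ht : Sq m n t) (hst : SameDiag m n s t) :
    ∃ k, (nextSE m n)^[k] s = t := by
  by_cases hc : s = (m - 1, n - 1)
  · subst hc
    exact ⟨0, (eq_corner_of_sameDiag ht hst.symm).symm⟩
  obtain ⟨k₁, hk₁⟩ := exists_iterate_eq_nwEnd hs hc
  obtain ⟨r, hr⟩ := exists_iterate_nwEnd_eq ht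
  obtain ⟨p, q⟩ := s; obtain ⟨h1, h2⟩ := hs
  simp only [Prod.mk.injEq, not_and] at hc
  generalize hj : m + n - 3 - (p + q) = j at hk₁
  rcases hst with hst | hst
  · have hu : Sq m n (nwEnd n j) := by simp only [Sq, nwEnd]; omega
    have hu_ne : nwEnd n j ≠ (m - 1, n - 1) := by simp only [nwEnd, ne_eq, Prod.mk.injEq]; omega
    obtain ⟨k₂, hk₂⟩ := exists_iterate_eq_nwEnd hu hu_ne
    rw [nwEnd_fst_add_snd, show m + n - 3 - j = t.1 + t.2 by omega] at hk₂
    refine ⟨r + (k₂ + k₁), ?_⟩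
    rw [Function.iterate_add_apply, Function.iterate_add_apply, hk₁, hk₂, hr]
  · rw [show j = t.1 + t.2 by omega] at hk₁
    exact ⟨r + k₁, by rw [Function.iterate_add_apply, hk₁, hr]⟩

end Diagonal

namespace HamPathFromTo
variable {m n : ℕ} {ι τ s t : ℕ × ℕ} {l : List (ℕ × ℕ)}

lemma nodup (h : HamPathFromTo m n ι τ l) : l.Nodup := h.1.2.1

lemma sq_of_succ (h : HamPathFromTo m n ι τ l) (hst : Succ l s t) : Sq m n s :=
  (h.1.2.2 s).2 hst.mem_left

lemma ne_of_succ (h : HamPathFromTo m n ι τ l) (hst : Succ l s t) : s ≠ τ := by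
  rintro rfl
  exact not_succ_of_getLast? h.nodup h.2.2 hst

lemma succ_iff (h : HamPathFromTo m n ι τ l) :
    Succ l s t ↔
      TravelsEast m n l s ∧ t = moveE m n s ∨ TravelsNorth m n l s ∧ t = moveN m n s := by
  constructor
  · intro hst
    rcases (hst.rel h.1.1).2 with rfl | rfl
    exacts [Or.inl ⟨hst, rfl⟩, Or.inr ⟨hst, rfl⟩]
  · rintro (⟨hst, rfl⟩ | ⟨hst, rfl⟩) <;> exact hst

lemma travelsEast_or_travelsNorth (h : HamPathFromTo m n ι τ l) (hs : Sq m n s) (hτ : s ≠ τ) :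
    TravelsEast m n l s ∨ TravelsNorth m n l s := by
  obtain ⟨t, hst⟩ := exists_succ ((h.1.2.2 s).1 hs)
    (by rw [h.2.2]; exact fun he => hτ (Option.some.inj he).symm)
  rcases h.succ_iff.1 hst with ⟨hE, -⟩ | ⟨hN, -⟩
  exacts [Or.inl hE, Or.inr hN]

lemma travelsNorth_iff (h : HamPathFromTo m n ι τ l) :
    TravelsNorth m n l s ↔
      Sq m n s ∧ s ≠ τ ∧ (TravelsEast m n l s → moveN m n s = moveE m n s) := by
  refine ⟨fun hN => ⟨h.sq_of_succ hN, h.ne_of_succ hN, Succ.right_unique h.nodup hN⟩,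
    fun ⟨hs, hτ, hNE⟩ => ?_⟩
  rcases h.travelsEast_or_travelsNorth hs hτ with hE | hN
  · show Succ l s (moveN m n s)
    rw [hNE hE]
    exact hE
  · exact hN

/-- The square `sE = (nextSE s)N` is entered either from `s` or from `nextSE s`. -/
lemma travelsEast_iff_not_travelsNorth_nextSE (h : HamPathFromTo m n ι τ l) (hs : Sq m n s)
    (hne : nextSE m n s ≠ s) :
    TravelsEast m n l s ↔ moveE m n s ≠ ι ∧ ¬ TravelsNorth m n l (nextSE m n s) := by
  rw [travelsNorth_nextSE_iff hs]
  constructor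
  · intro hE
    refine ⟨?_, fun hN => hne (Succ.left_unique h.nodup hN hE)⟩
    rintro hι
    exact not_succ_of_head? h.nodup (hι ▸ h.2.1) hE
  · rintro ⟨hι, hN⟩
    obtain ⟨r, hr⟩ := exists_pred ((h.1.2.2 _).1 (sq_moveE hs))
      (by rw [h.2.1]; exact fun he => hι (Option.some.inj he).symm)
    rcases h.succ_iff.1 hr with ⟨-, he⟩ | ⟨-, he⟩
    · obtain rfl := moveE_injOn hs (h.sq_of_succ hr) he
      exact hr
    · obtain rfl := moveN_injOn (sq_nextSE hs) (h.sq_of_succ hr) ((moveN_nextSE hs).trans he)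
      exact absurd hr hN

lemma sq_terminal (h : HamPathFromTo m n ι τ l) : Sq m n τ :=
  (h.1.2.2 τ).2 (List.mem_of_getLast? h.2.2)

lemma travelsEast_nextSE (h : HamPathFromTo m n ι τ l) (hs : Sq m n s)
    (hE : TravelsEast m n l s) (hτ : nextSE m n s ≠ τ) : TravelsEast m n l (nextSE m n s) := by
  by_cases hne : nextSE m n s = s
  · rwa [hne]
  have hN := ((h.travelsEast_iff_not_travelsNorth_nextSE hs hne).1 hE).2
  rw [h.travelsNorth_iff] at hN
  by_contra hE'
  exact hN ⟨sq_nextSE hs, hτ, fun hE'' => absurd hE'' hE'⟩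

lemma travelsEast_iterate_nextSE (h : HamPathFromTo m n ι τ l) (hs : Sq m n s)
    (hnt : ¬ SameDiag m n s τ) (hE : TravelsEast m n l s) (k : ℕ) :
    TravelsEast m n l ((nextSE m n)^[k] s) := by
  induction k with
  | zero => exact hE
  | succ k ih =>
    obtain ⟨hsk, hdk⟩ := sq_sameDiag_iterate_nextSE hs k
    rw [Function.iterate_succ_apply']
    exact h.travelsEast_nextSE hsk ih fun he => hnt (he ▸ hdk.trans (sameDiag_nextSE hsk))

lemma travelsEast_iff_forall_sameDiag (h : HamPathFromTo m n ι τ l) (hs : Sq m n s)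
    (hnt : ¬ SameDiag m n s τ) :
    TravelsEast m n l s ↔ ∀ t, Sq m n t → SameDiag m n t s → TravelsEast m n l t := by
  refine ⟨fun hE t ht hts => ?_, fun H => H s hs (Or.inl rfl)⟩
  obtain ⟨k, rfl⟩ := exists_iterate_nextSE_eq hs ht hts.symm
  exact h.travelsEast_iterate_nextSE hs hnt hE k

end HamPathFromTo

section TwoPaths
variable {m n : ℕ} {ι τ s : ℕ × ℕ} {l₁ l₂ : List (ℕ × ℕ)}

lemma travelsNorth_iff_of_travelsEast_iff (h₁ : HamPathFromTo m n ι τ l₁)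
    (h₂ : HamPathFromTo m n ι τ l₂) (hE : TravelsEast m n l₁ s ↔ TravelsEast m n l₂ s) :
    TravelsNorth m n l₁ s ↔ TravelsNorth m n l₂ s := by
  rw [h₁.travelsNorth_iff, h₂.travelsNorth_iff, hE]

/-- On the terminal diagonal the directions are forced, walking back from `τ`. -/
lemma travelsEast_iff_of_iterate_nextSE_eq (h₁ : HamPathFromTo m n ι τ l₁)
    (h₂ : HamPathFromTo m n ι τ l₂) {k : ℕ} (hs : Sq m n s) (hk : (nextSE m n)^[k] s = τ) :
    TravelsEast m n l₁ s ↔ TravelsEast m n l₂ s := by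
  induction k generalizing s with
  | zero => exact iff_of_false (fun hE => h₁.ne_of_succ hE hk) (fun hE => h₂.ne_of_succ hE hk)
  | succ k ih =>
    have ih := ih (sq_nextSE hs) hk
    by_cases hne : nextSE m n s = s
    · rwa [hne] at ih
    rw [h₁.travelsEast_iff_not_travelsNorth_nextSE hs hne,
      h₂.travelsEast_iff_not_travelsNorth_nextSE hs hne,
      travelsNorth_iff_of_travelsEast_iff h₁ h₂ ih]

theorem travelsEast_iff_of_diagonals (h₁ : HamPathFromTo m n ι τ l₁)
    (h₂ : HamPathFromTo m n ι τ l₂)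
    (hdiag : ∀ σ, Sq m n σ → ¬ SameDiag m n σ τ →
      ((∀ s, Sq m n s → SameDiag m n s σ → TravelsEast m n l₁ s) ↔
       (∀ s, Sq m n s → SameDiag m n s σ → TravelsEast m n l₂ s))) (s : ℕ × ℕ) :
    TravelsEast m n l₁ s ↔ TravelsEast m n l₂ s := by
  by_cases hs : Sq m n s
  swap
  · exact iff_of_false (fun hE => hs (h₁.sq_of_succ hE)) (fun hE => hs (h₂.sq_of_succ hE))
  by_cases hst : SameDiag m n s τ
  · obtain ⟨k, hk⟩ := exists_iterate_nextSE_eq hs h₁.sq_terminal hst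
    exact travelsEast_iff_of_iterate_nextSE_eq h₁ h₂ hs hk
  · rw [h₁.travelsEast_iff_forall_sameDiag hs hst, h₂.travelsEast_iff_forall_sameDiag hs hst,
      hdiag s hs hst]

end TwoPaths

theorem uniqueness_general (m n : ℕ)
    (l₁ l₂ : List (ℕ × ℕ)) (ι τ : ℕ × ℕ)
    (h₁ : HamPathFromTo m n ι τ l₁) (h₂ : HamPathFromTo m n ι τ l₂)
    (hdiag : ∀ σ, Sq m n σ → ¬ SameDiag m n σ τ →
      ((∀ s, Sq m n s → SameDiag m n s σ → TravelsEast m n l₁ s) ↔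
       (∀ s, Sq m n s → SameDiag m n s σ → TravelsEast m n l₂ s))) :
    l₁ = l₂ := by
  have hE := travelsEast_iff_of_diagonals h₁ h₂ hdiag
  refine eq_of_succ_iff h₁.nodup h₂.nodup (h₁.2.1.trans h₂.2.1.symm) fun s t => ?_
  rw [h₁.succ_iff, h₂.succ_iff, hE s, travelsNorth_iff_of_travelsEast_iff h₁ h₂ (hE s)]

theorem uniqueness (m n : ℕ) (hm : 1 ≤ m) (hn : 1 ≤ n)
    (l₁ l₂ : List (ℕ × ℕ)) (ι τ : ℕ × ℕ)
    (h₁ : HamPathFromTo m n ι τ l₁) (h₂ : HamPathFromTo m n ι τ l₂)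
    (hdiag : ∀ σ, Sq m n σ → ¬ SameDiag m n σ τ →
      ((∀ s, Sq m n s → SameDiag m n s σ → TravelsEast m n l₁ s) ↔
       (∀ s, Sq m n s → SameDiag m n s σ → TravelsEast m n l₂ s))) :
    l₁ = l₂ :=
  uniqueness_general m n l₁ l₂ ι τ h₁ h₂ hdiag

end ProjBoard
end

section
/- Assume m ≥ n ≥ 3 and S_a ∪ S_b (a ≤ b, a+b = m+n−3) is the terminal diagonal of a hamiltonian path H in the m×n projective checkerboard B(m,n), with initial square ι and terminal square τ. Let τ_+ be the southeasternmost square of S_b. If every non-terminal diagonal travels north in H, then a ≤ m−2 ≤ b, and at least one of the following holds: (i) ι = τ_+E; (ii) the inverse of τ equals τ_+E; (iii) m = n = a+2 = b+1 and either ι or the inverse of τ equals the transpose of τ_+E (where the transpose of (p,q) is (q,p)); (iv) a+1 = b = n = m−2 and either ι or the inverse of τ equals τ_+ = (n,0). -/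
/-!
Columns `x` and `m - 1 - x` of `B(m, n)` form a cycle under north moves, and a hamiltonian path
contains no cycle: measured by position along the path, some square of the pair comes after its
north neighbour, so it does not travel north and lies on the terminal diagonal. For `b < m - 2` the columns `b + 2`
and `m - 3 - b` do not, which gives the bounds. Otherwise look at the outer columns `0` and
`m - 1`: they meet the terminal diagonal in at most three squares, around `τ₊` and `τ₊E`.
Following the path forward out of these squares, and backward into `τ₊E` (or into `τ₊`) from
its west or south neighbour, every branch either lets all squares of the outer cycle advance
north, directly or through a short detour such as `(0, n-1) → (1, n-1) → (m-2, 0) → (m-1, 0)`,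
or stops at `ι` or `τ` in one of the listed positions.
-/

namespace ProjBoard

section PathOrder

variable {α : Type*} {l : List α} {x y y' : α}

def PathEdge (l : List α) (x y : α) : Prop :=
  ∃ i : ℕ, l[i]? = some x ∧ l[i + 1]? = some y

lemma PathEdge.right_unique (hnd : l.Nodup) (h : PathEdge l x y) (h' : PathEdge l x y') :
    y = y' := by
  obtain ⟨i, hi, hi1⟩ := h
  obtain ⟨j, hj, hj1⟩ := h'
  obtain rfl : i = j :=
    (List.getElem?_inj (List.getElem?_eq_some_iff.1 hi).1 hnd).1 (hi.trans hj.symm)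
  exact Option.some_inj.1 (hi1.symm.trans hj1)

lemma PathEdge.idxOf_lt [BEq α] [LawfulBEq α] (hnd : l.Nodup) (h : PathEdge l x y) :
    l.idxOf x < l.idxOf y := by
  obtain ⟨i, hi, hi1⟩ := h
  obtain ⟨hi, rfl⟩ := List.getElem?_eq_some_iff.1 hi
  obtain ⟨hi1, rfl⟩ := List.getElem?_eq_some_iff.1 hi1
  rw [hnd.idxOf_getElem, hnd.idxOf_getElem]
  exact lt_add_one i

lemma exists_pathEdge_of_getLast?_ne {R : α → α → Prop} (hR : l.IsChain R) (hx : x ∈ l)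
    (hlast : l.getLast? ≠ some x) : ∃ y, R x y ∧ PathEdge l x y := by
  obtain ⟨i, hi, rfl⟩ := List.getElem_of_mem hx
  have hi1 : i + 1 < l.length := by
    by_contra h
    rw [List.getLast?_eq_getElem?, show l.length - 1 = i by omega,
      List.getElem?_eq_getElem hi] at hlast
    exact hlast rfl
  exact ⟨l[i + 1], List.isChain_iff_getElem.1 hR i hi1, i, List.getElem?_eq_getElem hi,
    List.getElem?_eq_getElem hi1⟩

lemma exists_pathEdge_of_head?_ne {R : α → α → Prop} (hR : l.IsChain R) (hx : x ∈ l)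
    (hhead : l.head? ≠ some x) : ∃ r, R r x ∧ PathEdge l r x := by
  obtain ⟨i, hi, rfl⟩ := List.getElem_of_mem hx
  obtain ⟨j, rfl⟩ : ∃ j, i = j + 1 := Nat.exists_eq_add_one.2 <| Nat.pos_of_ne_zero fun h => by
    subst h
    exact hhead (by rw [List.head?_eq_getElem?, List.getElem?_eq_getElem hi])
  exact ⟨l[j], List.isChain_iff_getElem.1 hR j hi, j, List.getElem?_eq_getElem _,
    List.getElem?_eq_getElem hi⟩

end PathOrder

lemma lt_of_forall_lt_add_one {β : Type*} [Preorder β] {f : ℕ → β} {q q' : ℕ} (hqq' : q < q')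
    (h : ∀ k, q ≤ k → k < q' → f k < f (k + 1)) : f q < f q' := by
  induction q', hqq' using Nat.le_induction with
  | base => exact h q le_rfl (lt_add_one q)
  | succ k hk ih => exact (ih fun j hj hjk => h j hj (by omega)).trans (h k (by omega) (by omega))

def moveW (m n : ℕ) (s : ℕ × ℕ) : ℕ × ℕ :=
  if 0 < s.1 then (s.1 - 1, s.2) else (m - 1, n - 1 - s.2)

def moveS (m n : ℕ) (s : ℕ × ℕ) : ℕ × ℕ :=
  if 0 < s.2 then (s.1, s.2 - 1) else (m - 1 - s.1, n - 1)

def inverse (m n : ℕ) (s : ℕ × ℕ) : ℕ × ℕ := (m - 1 - s.1, n - 1 - s.2)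

def NorthOffDiag (m n a b : ℕ) (l : List (ℕ × ℕ)) : Prop :=
  ∀ s, Sq m n s → s.1 + s.2 ≠ a → s.1 + s.2 ≠ b → TravelsNorth m n l s

section Board

variable {m n a b : ℕ} {ι τ x w s y : ℕ × ℕ} {l : List (ℕ × ℕ)}

lemma moveW_moveE (hx : Sq m n x) : moveW m n (moveE m n x) = x := by
  obtain ⟨p, q⟩ := x
  obtain ⟨hp, hq⟩ := hx
  grind [moveE, moveW]

lemma moveS_moveN (hx : Sq m n x) : moveS m n (moveN m n x) = x := by
  obtain ⟨p, q⟩ := x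
  obtain ⟨hp, hq⟩ := hx
  grind [moveN, moveS]

lemma HamPathFromTo.nodup_s9 (hl : HamPathFromTo m n ι τ l) : l.Nodup := hl.1.2.1

lemma HamPathFromTo.pathEdge_east_or_north (hl : HamPathFromTo m n ι τ l) (hx : Sq m n x)
    (hxτ : x ≠ τ) (he : moveE m n x = w) (hn : moveN m n x = y) :
    PathEdge l x w ∨ PathEdge l x y := by
  obtain ⟨⟨hch, -, hmem⟩, -, hlast⟩ := hl
  obtain ⟨z, ⟨-, rfl | rfl⟩, hxz⟩ := exists_pathEdge_of_getLast?_ne hch ((hmem x).1 hx)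
    (by rw [hlast]; exact fun h => hxτ (Option.some_inj.1 h).symm)
  exacts [Or.inl (he ▸ hxz), Or.inr (hn ▸ hxz)]

lemma HamPathFromTo.pathEdge_west_or_south (hl : HamPathFromTo m n ι τ l) (hx : Sq m n x)
    (hxι : x ≠ ι) : PathEdge l (moveW m n x) x ∨ PathEdge l (moveS m n x) x := by
  obtain ⟨⟨hch, -, hmem⟩, hhead, -⟩ := hl
  obtain ⟨r, ⟨hr, rfl | rfl⟩, hrx⟩ := exists_pathEdge_of_head?_ne hch ((hmem x).1 hx)
    (by rw [hhead]; exact fun h => hxι (Option.some_inj.1 h).symm)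
  exacts [Or.inl ((moveW_moveE hr).symm ▸ hrx), Or.inr ((moveS_moveN hr).symm ▸ hrx)]

lemma HamPathFromTo.pathEdge_of_west (hl : HamPathFromTo m n ι τ l) (hx : Sq m n x)
    (hxι : x ≠ ι) (hw : moveW m n x = w) (hs : moveS m n x = s) (hsy : PathEdge l s y)
    (hyx : y ≠ x) : PathEdge l w x :=
  hw ▸ (hl.pathEdge_west_or_south hx hxι).resolve_right
    fun h => hyx (hsy.right_unique hl.nodup_s9 (hs ▸ h))

lemma HamPathFromTo.pathEdge_of_south (hl : HamPathFromTo m n ι τ l) (hx : Sq m n x)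
    (hxι : x ≠ ι) (hw : moveW m n x = w) (hs : moveS m n x = s) (hwy : PathEdge l w y)
    (hyx : y ≠ x) : PathEdge l s x :=
  hs ▸ (hl.pathEdge_west_or_south hx hxι).resolve_left
    fun h => hyx (hwy.right_unique hl.nodup_s9 (hw ▸ h))

lemma NorthOffDiag.pathEdge (hnorth : NorthOffDiag m n a b l) {p q : ℕ} (hp : p < m)
    (hq : q < n) (ha : p + q ≠ a) (hb : p + q ≠ b) (hy : moveN m n (p, q) = y) :
    PathEdge l (p, q) y :=
  hy ▸ hnorth (p, q) ⟨hp, hq⟩ ha hb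

lemma idxOf_lt_of_column {p q q' : ℕ} (hq' : q' < n) (hqq' : q < q')
    (h : ∀ k, q ≤ k → k < q' → l.idxOf (p, k) < l.idxOf (moveN m n (p, k))) :
    l.idxOf (p, q) < l.idxOf (p, q') :=
  lt_of_forall_lt_add_one (f := fun k => l.idxOf (p, k)) hqq' fun k hk hkq' => by
    simpa [moveN, show k < n - 1 by omega] using h k hk hkq'

/-- Columns `x` and `m - 1 - x` form a cycle of north moves, so positions along the path cannot
increase all the way round it. -/
lemma false_of_columnPair (hnd : l.Nodup) (hnorth : NorthOffDiag m n a b l) (hn : 2 ≤ n)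
    {x : ℕ} (hx : x < m)
    (hdiag : ∀ p q, p = x ∨ p = m - 1 - x → q < n → p + q = a ∨ p + q = b →
      l.idxOf (p, q) < l.idxOf (moveN m n (p, q))) : False := by
  have hstep : ∀ p q, p = x ∨ p = m - 1 - x → q < n →
      l.idxOf (p, q) < l.idxOf (moveN m n (p, q)) := fun p q hp hq => by
    by_cases hd : p + q = a ∨ p + q = b
    · exact hdiag p q hp hq hd
    · obtain ⟨ha, hb⟩ := not_or.1 hd
      exact (hnorth.pathEdge (by omega) hq ha hb rfl).idxOf_lt hnd
  have hcycle : ∀ p, p = x ∨ p = m - 1 - x → l.idxOf (p, 0) < l.idxOf (m - 1 - p, 0) :=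
    fun p hp => (idxOf_lt_of_column (q' := n - 1) (by omega) (by omega)
      fun k _ hk => hstep p k hp (by omega)).trans
      (by simpa [moveN] using hstep p (n - 1) hp (by omega))
  have h₁ := hcycle x (Or.inl rfl)
  have h₂ := hcycle (m - 1 - x) (Or.inr rfl)
  rw [show m - 1 - (m - 1 - x) = x by omega] at h₂
  exact lt_asymm h₁ h₂

lemma sub_two_le_of_northOffDiag (hnd : l.Nodup) (hnorth : NorthOffDiag m n a b l) (hn : 2 ≤ n)
    (hab : a ≤ b) (habsum : a + b = m + n - 3) : m - 2 ≤ b := by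
  by_contra h
  exact false_of_columnPair hnd hnorth hn (x := b + 2) (by omega) fun p q _ _ _ => by omega

/-- For `b = m - 2`: `τ₊ = (m - 2, 0)`, `τ₊E = (m - 1, 0)`, the only diagonal square of the outer
columns is `(0, n - 1)`, and `(1, n - 1)` is diagonal only when `m = n + 2`. -/
theorem initIsTermE_of_b_eq_sub_two (hl : HamPathFromTo m n ι τ l)
    (hnorth : NorthOffDiag m n (n - 1) (m - 2) l) (hn : 3 ≤ n) (hnm : n + 1 ≤ m) :
    ι = (m - 1, 0) ∨ inverse m n τ = (m - 1, 0) ∨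
      (m = n + 2 ∧ (ι = (m - 2, 0) ∨ inverse m n τ = (m - 2, 0))) := by
  have hnd := hl.nodup_s9
  have hρ : l.idxOf (0, n - 1) < l.idxOf (m - 1, 0) → False := fun h =>
    false_of_columnPair hnd hnorth (x := 0) (by omega) (by omega) fun p q _ _ _ => by
      obtain ⟨rfl, rfl⟩ : p = 0 ∧ q = n - 1 := by omega
      simpa [moveN] using h
  by_cases hτ : τ = (0, n - 1)
  · exact Or.inr (Or.inl (by simp [hτ, inverse]))
  obtain hE | hN : PathEdge l (0, n - 1) (1, n - 1) ∨ PathEdge l (0, n - 1) (m - 1, 0) :=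
    hl.pathEdge_east_or_north ⟨by omega, by omega⟩ (Ne.symm hτ) (by grind [moveE])
      (by grind [moveN])
  swap
  · exact (hρ (hN.idxOf_lt hnd)).elim
  by_cases hι : ι = (m - 1, 0)
  · exact Or.inl hι
  have hin : PathEdge l (m - 2, 0) (m - 1, 0) :=
    hl.pathEdge_of_west ⟨by omega, by omega⟩ (Ne.symm hι) (by grind [moveW]) (by grind [moveS])
      hE (by simp; omega)
  have hdetour : l.idxOf (1, n - 1) < l.idxOf (m - 2, 0) → False := fun h =>
    hρ (((hE.idxOf_lt hnd).trans h).trans (hin.idxOf_lt hnd))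
  by_cases hm : m = n + 2
  swap
  · exact (hdetour ((hnorth.pathEdge (by omega) (by omega) (by omega) (by omega)
      (by grind [moveN])).idxOf_lt hnd)).elim
  refine Or.inr (Or.inr ⟨hm, ?_⟩)
  by_cases hτ' : τ = (1, n - 1)
  · exact Or.inr (by simp [hτ', inverse]; omega)
  by_cases hι' : ι = (m - 2, 0)
  · exact Or.inl hι'
  obtain hE' | hN' : PathEdge l (1, n - 1) (2, n - 1) ∨ PathEdge l (1, n - 1) (m - 2, 0) :=
    hl.pathEdge_east_or_north ⟨by omega, by omega⟩ (Ne.symm hτ') (by grind [moveE])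
      (by grind [moveN])
  swap
  · exact (hdetour (hN'.idxOf_lt hnd)).elim
  have hin' : PathEdge l (m - 3, 0) (m - 2, 0) :=
    hl.pathEdge_of_west ⟨by omega, by omega⟩ (Ne.symm hι') (by grind [moveW]) (by grind [moveS])
      hE' (by simp; omega)
  have h₂ : PathEdge l (2, n - 1) (m - 3, 0) :=
    hnorth.pathEdge (by omega) (by omega) (by omega) (by omega) (by grind [moveN])
  exact (hdetour (((hE'.idxOf_lt hnd).trans (h₂.idxOf_lt hnd)).trans (hin'.idxOf_lt hnd))).elim

/-- For `b = m - 1` the outer columns meet the terminal diagonal in `(0, n - 2)`, `τ₊E = (0, n - 1)`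
and `τ₊ = (m - 1, 0)`; if `τ₊E` comes before `τ₊`, all three advance north along the path. -/
lemma not_idxOf_lt_of_b_eq_sub_one (hl : HamPathFromTo m n ι τ l)
    (hnorth : NorthOffDiag m n (n - 2) (m - 1) l) (hn : 3 ≤ n) (hnm : n ≤ m)
    (hτplus : ¬τ = (m - 1, 0)) (hι : ¬ι = (0, n - 1)) :
    ¬l.idxOf (0, n - 1) < l.idxOf (m - 1, 0) := by
  have hnd := hl.nodup_s9
  intro hlt
  obtain hE | hN : PathEdge l (m - 1, 0) (0, n - 1) ∨ PathEdge l (m - 1, 0) (m - 1, 1) :=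
    hl.pathEdge_east_or_north ⟨by omega, by omega⟩ (Ne.symm hτplus) (by grind [moveE])
      (by grind [moveN])
  · exact lt_asymm hlt (hE.idxOf_lt hnd)
  have hS : PathEdge l (0, n - 2) (0, n - 1) :=
    hl.pathEdge_of_south ⟨by omega, by omega⟩ (Ne.symm hι) (by grind [moveW])
      (by grind [moveS]) hN (by simp; omega)
  refine false_of_columnPair hnd hnorth (x := 0) (by omega) (by omega) fun p q _ _ _ => ?_
  obtain ⟨rfl, rfl⟩ | ⟨rfl, rfl⟩ | ⟨rfl, rfl⟩ :
      (p = 0 ∧ q = n - 2) ∨ (p = 0 ∧ q = n - 1) ∨ (p = m - 1 ∧ q = 0) := by omega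
  · simpa [moveN, show n - 2 < n - 1 by omega, show n - 2 + 1 = n - 1 by omega]
      using hS.idxOf_lt hnd
  · simpa [moveN] using hlt
  · simpa [moveN, show 0 < n - 1 by omega] using hN.idxOf_lt hnd

theorem initIsTermE_of_b_eq_sub_one (hl : HamPathFromTo m n ι τ l)
    (hterm : τ.1 + τ.2 = n - 2 ∨ τ.1 + τ.2 = m - 1)
    (hnorth : NorthOffDiag m n (n - 2) (m - 1) l) (hn : 3 ≤ n) (hnm : n ≤ m) :
    ι = (0, n - 1) ∨ inverse m n τ = (0, n - 1) ∨
      (m = n ∧ (ι = (n - 1, 0) ∨ inverse m n τ = (n - 1, 0))) := by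
  have hnd := hl.nodup_s9
  by_cases hτplus : τ = (m - 1, 0)
  · exact Or.inr (Or.inl (by simp [hτplus, inverse]))
  by_cases hι : ι = (0, n - 1)
  · exact Or.inl hι
  by_cases hτ : τ = (0, n - 1)
  · subst hτ
    exact Or.inr (Or.inr ⟨by omega, Or.inr (by simp [inverse]; omega)⟩)
  have hσ := not_idxOf_lt_of_b_eq_sub_one hl hnorth hn hnm hτplus hι
  obtain hE | hN : PathEdge l (0, n - 1) (1, n - 1) ∨ PathEdge l (0, n - 1) (m - 1, 0) :=
    hl.pathEdge_east_or_north ⟨by omega, by omega⟩ (Ne.symm hτ) (by grind [moveE])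
      (by grind [moveN])
  swap
  · exact (hσ (hN.idxOf_lt hnd)).elim
  have hmn : m = n := by
    by_contra hmn
    have h : PathEdge l (0, n - 1) (m - 1, 0) :=
      hnorth.pathEdge (by omega) (by omega) (by omega) (by omega) (by grind [moveN])
    have h10 := congrArg Prod.fst (hE.right_unique hnd h)
    omega
  subst hmn
  refine Or.inr (Or.inr ⟨rfl, ?_⟩)
  by_cases hι' : ι = (m - 1, 0)
  · exact Or.inl hι'
  have hin : PathEdge l (m - 2, 0) (m - 1, 0) :=
    hl.pathEdge_of_west ⟨by omega, by omega⟩ (Ne.symm hι') (by grind [moveW]) (by grind [moveS])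
      hE (by simp; omega)
  have h₁ : PathEdge l (1, m - 1) (m - 2, 0) :=
    hnorth.pathEdge (by omega) (by omega) (by omega) (by omega) (by grind [moveN])
  exact (hσ (((hE.idxOf_lt hnd).trans (h₁.idxOf_lt hnd)).trans (hin.idxOf_lt hnd))).elim

/-- For `m ≤ b`: `τ₊ = (m - 1, b - (m - 1))`, `τ₊E = (0, a + 1)`, and the outer columns meet the
terminal diagonal only in `(0, a)` and `τ₊`. -/
theorem initIsTermE_of_le_b (hl : HamPathFromTo m n ι τ l) (hnorth : NorthOffDiag m n a b l)
    (hn : 3 ≤ n) (hnm : n ≤ m) (hmb : m ≤ b) (habsum : a + b = m + n - 3) :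
    ι = (0, a + 1) ∨ inverse m n τ = (0, a + 1) := by
  have hnd := hl.nodup_s9
  by_cases hτplus : τ = (m - 1, b - (m - 1))
  · exact Or.inr (by simp [hτplus, inverse]; omega)
  by_cases hι : ι = (0, a + 1)
  · exact Or.inl hι
  exfalso
  obtain hE | hN : PathEdge l (m - 1, b - (m - 1)) (0, a + 1) ∨
      PathEdge l (m - 1, b - (m - 1)) (m - 1, b - (m - 1) + 1) :=
    hl.pathEdge_east_or_north ⟨by omega, by omega⟩ (Ne.symm hτplus) (by grind [moveE])
      (by grind [moveN])
  · have h₀ : l.idxOf (0, a + 1) < l.idxOf (0, n - 1) :=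
      idxOf_lt_of_column (by omega) (by omega) fun k _ _ =>
        (hnorth.pathEdge (by omega) (by omega) (by omega) (by omega) rfl).idxOf_lt hnd
    have h₁ : l.idxOf (0, n - 1) < l.idxOf (m - 1, 0) :=
      (hnorth.pathEdge (by omega) (by omega) (by omega) (by omega) (by grind [moveN])).idxOf_lt hnd
    have h₂ : l.idxOf (m - 1, 0) < l.idxOf (m - 1, b - (m - 1)) :=
      idxOf_lt_of_column (by omega) (by omega) fun k _ _ =>
        (hnorth.pathEdge (by omega) (by omega) (by omega) (by omega) rfl).idxOf_lt hnd
    exact lt_asymm (h₀.trans (h₁.trans h₂)) (hE.idxOf_lt hnd)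
  have hS : PathEdge l (0, a) (0, a + 1) :=
    hl.pathEdge_of_south ⟨by omega, by omega⟩ (Ne.symm hι) (by grind [moveW]) (by grind [moveS])
      hN (by simp; omega)
  refine false_of_columnPair hnd hnorth (x := 0) (by omega) (by omega) fun p q _ _ _ => ?_
  obtain ⟨rfl, rfl⟩ | ⟨rfl, rfl⟩ : (p = 0 ∧ a = q) ∨ (p = m - 1 ∧ q = b - (m - 1)) := by omega
  · simpa [moveN, show a < n - 1 by omega] using hS.idxOf_lt hnd
  · simpa [moveN, show b - (m - 1) < n - 1 by omega] using hN.idxOf_lt hnd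

end Board

theorem initIsTermE (m n a b : ℕ) (hnm : n ≤ m) (hn : 3 ≤ n)
    (hab : a ≤ b) (habsum : a + b = m + n - 3)
    (l : List (ℕ × ℕ)) (ι τ : ℕ × ℕ) (hl : HamPathFromTo m n ι τ l)
    (hterm : τ.1 + τ.2 = a ∨ τ.1 + τ.2 = b)
    (hnorth : ∀ s, Sq m n s → s.1 + s.2 ≠ a → s.1 + s.2 ≠ b → TravelsNorth m n l s) :
    (a ≤ m - 2 ∧ m - 2 ≤ b) ∧
    (ι = moveE m n (tauPlus m n b) ∨
     (m - 1 - τ.1, n - 1 - τ.2) = moveE m n (tauPlus m n b) ∨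
     (m = n ∧ n = a + 2 ∧ n = b + 1 ∧
       (ι = (moveE m n (tauPlus m n b)).swap ∨
        (m - 1 - τ.1, n - 1 - τ.2) = (moveE m n (tauPlus m n b)).swap)) ∨
     (a + 1 = b ∧ b = n ∧ n = m - 2 ∧
       (ι = tauPlus m n b ∨ (m - 1 - τ.1, n - 1 - τ.2) = tauPlus m n b))) := by
  have hb : m - 2 ≤ b := sub_two_le_of_northOffDiag hl.nodup_s9 hnorth (by omega) hab habsum
  refine ⟨⟨by omega, hb⟩, ?_⟩
  rcases (show b = m - 2 ∨ b = m - 1 ∨ m ≤ b by omega) with rfl | rfl | hmb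
  · obtain rfl : a = n - 1 := by omega
    have hτplus : tauPlus m n (m - 2) = (m - 2, 0) := if_pos (by omega)
    rw [hτplus, show moveE m n (m - 2, 0) = (m - 1, 0) by grind [moveE]]
    rcases initIsTermE_of_b_eq_sub_two hl hnorth hn (by omega) with h | h | ⟨hm, h⟩
    exacts [Or.inl h, Or.inr (Or.inl h), Or.inr (Or.inr (Or.inr ⟨by omega, by omega, by omega, h⟩))]
  · obtain rfl : a = n - 2 := by omega
    have hτplus : tauPlus m n (m - 1) = (m - 1, 0) := if_pos le_rfl
    rw [hτplus, show moveE m n (m - 1, 0) = (0, n - 1) by grind [moveE]]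
    rcases initIsTermE_of_b_eq_sub_one hl hterm hnorth hn hnm with h | h | ⟨hm, h⟩
    exacts [Or.inl h, Or.inr (Or.inl h), Or.inr (Or.inr (Or.inl ⟨hm, by omega, by omega, h⟩))]
  · have hτplus : tauPlus m n b = (m - 1, b - (m - 1)) := if_neg (by omega)
    rw [hτplus, show moveE m n (m - 1, b - (m - 1)) = (0, a + 1) by grind [moveE]]
    exact (initIsTermE_of_le_b hl hnorth hn hnm hmb habsum).imp_right Or.inl

end ProjBoard
end

section
/- Let m ≥ n ≥ 1 and let H be a hamiltonian path in the m×n projective checkerboard B(m,n). If D is an inner diagonal (relative to the terminal diagonal of H) that travels east in H, then either D is rowful, or every inner diagonal travels east in H. -/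
/-!
Every square off the terminal diagonal leaves eastwards or northwards, and every square has a
single predecessor in the path. So if `σ` travels east, the square whose north neighbour is `σE`
must travel east as well. Along a subdiagonal this pushes eastward travel to the south-east, and the
wrap-around edges carry it from the south-east end of `S_i` to the north-west end of `S_j`
(`i + j = m + n - 3`). Hence a non-terminal diagonal travels either entirely east or entirely north.

Suppose an inner diagonal `D_c` with `c ≤ n - 2` travels east but some inner diagonal does not.
Take `c` largest and `u` least with `D_{n-1+u}` not travelling east. The diagonals `D_{c+1}, …,
D_{n-2}` and `D_{n-1+u}` then travel north and `D_{n-1}, …, D_{n-2+u}` travel east, and these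
moves close a cycle running around the border of the board, which a path cannot contain.
-/

namespace ProjBoard

open Relation

def Next {α : Type*} (l : List α) (s t : α) : Prop :=
  ∃ i : ℕ, l[i]? = some s ∧ l[i + 1]? = some t

section Next

variable {α : Type*} {l : List α}

lemma index_eq_of_getElem?_eq (hl : l.Nodup) {i j : ℕ} {x : α}
    (hi : l[i]? = some x) (hj : l[j]? = some x) : i = j :=
  (List.getElem?_inj (List.getElem?_eq_some_iff.mp hi).1 hl).mp (hi.trans hj.symm)

lemma Next.getElem?_succ (hl : l.Nodup) {s t : α} (h : Next l s t) {i : ℕ}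
    (hi : l[i]? = some s) : l[i + 1]? = some t := by
  obtain ⟨k, hk, hk1⟩ := h
  rwa [index_eq_of_getElem?_eq hl hi hk]

lemma Next.left_unique (hl : l.Nodup) {s s' t : α} (h : Next l s t) (h' : Next l s' t) :
    s = s' := by
  obtain ⟨k, hk, hk1⟩ := h
  obtain ⟨k', hk', hk1'⟩ := h'
  have : k + 1 = k' + 1 := index_eq_of_getElem?_eq hl hk1 hk1'
  rw [show k = k' by omega, hk'] at hk
  exact (Option.some_inj.mp hk).symm

lemma exists_index_gt_of_transGen (hl : l.Nodup) {s t : α}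
    (h : TransGen (Next l) s t) {i : ℕ} (hi : l[i]? = some s) :
    ∃ j, i < j ∧ l[j]? = some t := by
  induction h with
  | single hst => exact ⟨i + 1, by omega, hst.getElem?_succ hl hi⟩
  | tail _ hbc ih =>
    obtain ⟨j, hij, hj⟩ := ih
    exact ⟨j + 1, by omega, hbc.getElem?_succ hl hj⟩

lemma not_transGen_next_self (hl : l.Nodup) (s : α) : ¬ TransGen (Next l) s s := by
  intro h
  obtain ⟨_, ⟨i, hi, _⟩, _⟩ := TransGen.head'_iff.mp h
  obtain ⟨j, hij, hj⟩ := exists_index_gt_of_transGen hl h hi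
  exact hij.ne (index_eq_of_getElem?_eq hl hi hj)

lemma exists_next_of_mem {R : α → α → Prop} (hR : l.IsChain R) {s τ : α} (hs : s ∈ l)
    (hτ : l.getLast? = some τ) (hsτ : s ≠ τ) : ∃ t, Next l s t ∧ R s t := by
  obtain ⟨k, hk, rfl⟩ := List.mem_iff_getElem.mp hs
  by_cases hk1 : k + 1 < l.length
  · exact ⟨l[k + 1], ⟨k, List.getElem?_eq_getElem hk, List.getElem?_eq_getElem hk1⟩,
      List.isChain_iff_getElem.mp hR k hk1⟩
  · refine absurd ?_ hsτ
    rw [List.getLast?_eq_getElem?, show l.length - 1 = k by omega,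
      List.getElem?_eq_getElem hk] at hτ
    exact Option.some_inj.mp hτ

end Next

lemma moveE_of_lt {m n x : ℕ} (y : ℕ) (h : x < m - 1) : moveE m n (x, y) = (x + 1, y) := by
  simp [moveE, h]

lemma moveE_of_eq {m n x : ℕ} (y : ℕ) (h : x = m - 1) : moveE m n (x, y) = (0, n - 1 - y) := by
  simp [moveE, h]

lemma moveN_of_lt {m n y : ℕ} (x : ℕ) (h : y < n - 1) : moveN m n (x, y) = (x, y + 1) := by
  simp [moveN, h]

lemma moveN_of_eq {m n y : ℕ} (x : ℕ) (h : y = n - 1) : moveN m n (x, y) = (m - 1 - x, 0) := by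
  simp [moveN, h]

/-- The square `s` lies on the diagonal `D_σ = S_σ ∪ S_{m+n-3-σ}`. -/
def OnDiag (m n σ : ℕ) (s : ℕ × ℕ) : Prop :=
  s.1 + s.2 = σ ∨ s.1 + s.2 + σ = m + n - 3

def DiagTravelsEast (m n : ℕ) (l : List (ℕ × ℕ)) (σ : ℕ) : Prop :=
  ∀ s, Sq m n s → OnDiag m n σ s → TravelsEast m n l s

section Path

variable {m n : ℕ} {l : List (ℕ × ℕ)} {τ : ℕ × ℕ}

lemma travelsEast_or_travelsNorth (hl : IsHamPath m n l) (hτ : l.getLast? = some τ)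
    {s : ℕ × ℕ} (hs : Sq m n s) (hsτ : s ≠ τ) : TravelsEast m n l s ∨ TravelsNorth m n l s := by
  obtain ⟨t, hst, -, rfl | rfl⟩ := exists_next_of_mem hl.1 ((hl.2.2 s).mp hs) hτ hsτ
  exacts [Or.inl hst, Or.inr hst]

/-- Each square has a single predecessor in the path. -/
lemma travelsEast_of_moveN_eq_moveE (hl : IsHamPath m n l) (hτ : l.getLast? = some τ)
    {s y : ℕ × ℕ} (hs : TravelsEast m n l s) (hy : Sq m n y) (hyτ : y ≠ τ)
    (hys : moveN m n y = moveE m n s) : TravelsEast m n l y := by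
  rcases travelsEast_or_travelsNorth hl hτ hy hyτ with hE | hN
  · exact hE
  · have hN : Next l y (moveE m n s) := hys ▸ hN
    rwa [hN.left_unique hl.2.1 hs]

lemma travelsEast_of_travelsEast_of_le (hl : IsHamPath m n l) (hτ : l.getLast? = some τ)
    {x y : ℕ} (h : TravelsEast m n l (x, y)) (hy : y < n) (hτxy : τ.1 + τ.2 ≠ x + y)
    {x' : ℕ} (hxx' : x ≤ x') (hx' : x' < m) (y' : ℕ) (hsum : x' + y' = x + y) :
    TravelsEast m n l (x', y') := by
  induction x', hxx' using Nat.le_induction generalizing y' with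
  | base => rwa [show y' = y by omega]
  | succ x' hxx' ih =>
    refine travelsEast_of_moveN_eq_moveE hl hτ (ih (by omega) (y' + 1) (by omega))
      ⟨hx', by omega⟩ (fun h => hτxy (by rw [← h]; omega)) ?_
    rw [moveN_of_lt _ (by omega), moveE_of_lt _ (by omega)]

lemma travelsEast_top_of_travelsEast_bottom (hl : IsHamPath m n l) (hτ : l.getLast? = some τ)
    {x : ℕ} (h : TravelsEast m n l (x, 0)) (hx : x < m - 1) (hn : 0 < n)
    (hτx : τ.1 + τ.2 + x ≠ m + n - 3) : TravelsEast m n l (m - 2 - x, n - 1) := by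
  refine travelsEast_of_moveN_eq_moveE hl hτ h ⟨by omega, by omega⟩
    (fun h => hτx (by rw [← h]; omega)) ?_
  rw [moveN_of_eq _ rfl, moveE_of_lt _ hx, show m - 1 - (m - 2 - x) = x + 1 by omega]

lemma travelsEast_left_of_travelsEast_right (hl : IsHamPath m n l) (hτ : l.getLast? = some τ)
    {y : ℕ} (h : TravelsEast m n l (m - 1, y)) (hy : y < n - 1) (hm : 0 < m)
    (hτy : τ.1 + τ.2 + y + 1 ≠ n - 1) : TravelsEast m n l (0, n - 2 - y) := by
  refine travelsEast_of_moveN_eq_moveE hl hτ h ⟨hm, by omega⟩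
    (fun h => hτy (by rw [← h]; omega)) ?_
  rw [moveN_of_lt _ (by omega), moveE_of_eq _ rfl, show n - 2 - y + 1 = n - 1 - y by omega]

lemma travelsEast_of_travelsEast_partner (hl : IsHamPath m n l) (hτ : l.getLast? = some τ)
    {σ σ' : ℕ} (hσσ' : σ + σ' + 3 = m + n) (hτσ : τ.1 + τ.2 ≠ σ) (hτσ' : τ.1 + τ.2 ≠ σ')
    {s : ℕ × ℕ} (hs : Sq m n s) (hsσ : s.1 + s.2 = σ) (hse : TravelsEast m n l s)
    {t : ℕ × ℕ} (ht : Sq m n t) (htσ' : t.1 + t.2 = σ') : TravelsEast m n l t := by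
  obtain ⟨x, y⟩ := s
  obtain ⟨x', y'⟩ := t
  simp only [Sq] at hs ht hsσ htσ'
  have descend := @travelsEast_of_travelsEast_of_le m n l τ hl hτ
  rcases lt_or_ge σ (m - 1) with hσ | hσ
  · have hbottom := descend hse hs.2 (by omega) (by omega : x ≤ σ) (by omega) 0 (by omega)
    have htop := travelsEast_top_of_travelsEast_bottom hl hτ hbottom hσ (by omega) (by omega)
    exact descend htop (by omega) (by omega) (by omega) ht.1 y' (by omega)
  · have hright := descend hse hs.2 (by omega) (by omega : x ≤ m - 1) (by omega) (σ - (m - 1))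
      (by omega)
    have hleft := travelsEast_left_of_travelsEast_right hl hτ hright (by omega) (by omega)
      (by omega)
    exact descend hleft (by omega) (by omega) (Nat.zero_le x') ht.1 y' (by omega)

lemma diagTravelsEast_of_travelsEast (hl : IsHamPath m n l) (hτ : l.getLast? = some τ)
    {σ : ℕ} (hσ : σ + 3 ≤ m + n) (hτσ : ¬ OnDiag m n σ τ) {s : ℕ × ℕ} (hs : Sq m n s)
    (hsσ : OnDiag m n σ s) (hse : TravelsEast m n l s) : DiagTravelsEast m n l σ := by
  intro t ht htσ
  unfold OnDiag at hτσ hsσ htσ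
  obtain ⟨σ₁, σ₂, hsσ₁, hσ₁₂, hτσ₁, hτσ₂, htσ₁₂⟩ : ∃ σ₁ σ₂, s.1 + s.2 = σ₁ ∧ σ₁ + σ₂ + 3 = m + n ∧
      τ.1 + τ.2 ≠ σ₁ ∧ τ.1 + τ.2 ≠ σ₂ ∧ (t.1 + t.2 = σ₁ ∨ t.1 + t.2 = σ₂) :=
    ⟨_, m + n - 3 - (s.1 + s.2), rfl, by omega, by omega, by omega, by omega⟩
  have partner : ∀ t, Sq m n t → t.1 + t.2 = σ₂ → TravelsEast m n l t := fun t ht htσ₂ =>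
    travelsEast_of_travelsEast_partner hl hτ hσ₁₂ hτσ₁ hτσ₂ hs hsσ₁ hse ht htσ₂
  rcases htσ₁₂ with htσ₁ | htσ₂
  · -- the north-west end of `S_σ₂`
    have hw : Sq m n (σ₂ - (n - 1), σ₂ - (σ₂ - (n - 1))) := by
      simp only [Sq] at hs ⊢; omega
    have hwσ₂ : (σ₂ - (n - 1)) + (σ₂ - (σ₂ - (n - 1))) = σ₂ := by omega
    exact travelsEast_of_travelsEast_partner hl hτ (by omega) hτσ₂ hτσ₁ hw hwσ₂
      (partner _ hw hwσ₂) ht htσ₁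
  · exact partner t ht htσ₂

lemma travelsNorth_of_not_diagTravelsEast (hl : IsHamPath m n l) (hτ : l.getLast? = some τ)
    {σ : ℕ} (hσ : σ + 3 ≤ m + n) (hτσ : ¬ OnDiag m n σ τ) (hσE : ¬ DiagTravelsEast m n l σ)
    {t : ℕ × ℕ} (ht : Sq m n t) (htσ : OnDiag m n σ t) : TravelsNorth m n l t :=
  (travelsEast_or_travelsNorth hl hτ ht fun h => hτσ (h ▸ htσ)).resolve_left
    fun hE => hσE (diagTravelsEast_of_travelsEast hl hτ hσ hτσ ht htσ hE)

lemma reflTransGen_next_of_travelsEast {x x' : ℕ} (y : ℕ) (hxx' : x ≤ x') (hx' : x' < m)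
    (h : ∀ z, x ≤ z → z < x' → TravelsEast m n l (z, y)) :
    ReflTransGen (Next l) (x, y) (x', y) := by
  induction x', hxx' using Nat.le_induction with
  | base => rfl
  | succ x' hxx' ih =>
    refine (ih (by omega) fun z hz hzx' => h z hz (by omega)).tail ?_
    have hE : Next l (x', y) (moveE m n (x', y)) := h x' hxx' (by omega)
    rwa [moveE_of_lt _ (by omega)] at hE

lemma reflTransGen_next_of_travelsNorth (x : ℕ) {y y' : ℕ} (hyy' : y ≤ y') (hy' : y' < n)
    (h : ∀ z, y ≤ z → z < y' → TravelsNorth m n l (x, z)) :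
    ReflTransGen (Next l) (x, y) (x, y') := by
  induction y', hyy' using Nat.le_induction with
  | base => rfl
  | succ y' hyy' ih =>
    refine (ih (by omega) fun z hz hzy' => h z hz (by omega)).tail ?_
    have hN : Next l (x, y') (moveN m n (x, y')) := h y' hyy' (by omega)
    rwa [moveN_of_lt _ (by omega)] at hN

/-- The hypotheses describe a cycle along the border of the board,
`(m-1-u, 0) → … → (m-1, 0) → … → (m-1, n-2-c) → (0, c+1) → … → (0, n-1) → … → (u, n-1)`
and back to `(m-1-u, 0)`, which a path cannot contain. -/
lemma not_pinwheel (hl : l.Nodup) {c u : ℕ} (hc : c + 2 ≤ n) (hu : u < m)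
    (hcorner : TravelsEast m n l (m - 1, n - 2 - c))
    (hright : ∀ y < n - 2 - c, TravelsNorth m n l (m - 1, y))
    (hleft : ∀ y, c < y → y < n - 1 → TravelsNorth m n l (0, y))
    (hbottom : ∀ x, m - 1 - u ≤ x → x < m - 1 → TravelsEast m n l (x, 0))
    (htop : ∀ x < u, TravelsEast m n l (x, n - 1))
    (hwrap : TravelsNorth m n l (u, n - 1)) : False := by
  have hcorner' : Next l (m - 1, n - 2 - c) (0, c + 1) := by
    rwa [TravelsEast, moveE_of_eq _ rfl, show n - 1 - (n - 2 - c) = c + 1 by omega] at hcorner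
  have hwrap' : Next l (u, n - 1) (m - 1 - u, 0) := by
    rwa [TravelsNorth, moveN_of_eq _ rfl] at hwrap
  have hbottom_right : ReflTransGen (Next l) (m - 1 - u, 0) (m - 1, n - 2 - c) :=
    (reflTransGen_next_of_travelsEast 0 (by omega) (by omega) hbottom).trans
      (reflTransGen_next_of_travelsNorth _ (Nat.zero_le _) (by omega) fun y _ hy => hright y hy)
  have hleft_top : ReflTransGen (Next l) (0, c + 1) (u, n - 1) :=
    (reflTransGen_next_of_travelsNorth 0 (by omega) (by omega) fun y hy => hleft y (by omega)).trans
      (reflTransGen_next_of_travelsEast _ (Nat.zero_le _) hu fun x _ hx => htop x hx)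
  exact not_transGen_next_self hl _
    (.trans_right hbottom_right (.head' hcorner' (hleft_top.tail hwrap')))

lemma diagTravelsEast_of_diagTravelsEast_low (hl : IsHamPath m n l) (hτ : l.getLast? = some τ)
    {a : ℕ} (hτa : OnDiag m n a τ) (hnm : n ≤ m) {c : ℕ} (hc : c + 2 ≤ n) (hac : a < c)
    (hcE : DiagTravelsEast m n l c) {u : ℕ} (hu : a + u + 2 < m) :
    DiagTravelsEast m n l (n - 1 + u) := by
  classical
  by_contra hnot
  have hex : ∃ u, ¬ DiagTravelsEast m n l (n - 1 + u) := ⟨u, hnot⟩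
  have hu₀ : Nat.find hex ≤ u := Nat.find_min' hex hnot
  set u₀ := Nat.find hex
  set P : ℕ → Prop := fun c => a < c ∧ DiagTravelsEast m n l c
  set c₀ := Nat.findGreatest P (n - 2)
  obtain ⟨hac₀, hc₀E⟩ : P c₀ := Nat.findGreatest_spec (P := P) (by omega : c ≤ n - 2) ⟨hac, hcE⟩
  have hc₀ : c₀ ≤ n - 2 := Nat.findGreatest_le _
  have hnorth : ∀ σ, a < σ → σ + a + 3 < m + n → ¬ DiagTravelsEast m n l σ →
      ∀ t, Sq m n t → OnDiag m n σ t → TravelsNorth m n l t := fun σ haσ hσa hσ t ht htσ =>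
    travelsNorth_of_not_diagTravelsEast hl hτ (by omega) (by unfold OnDiag at hτa ⊢; omega) hσ
      ht htσ
  have hlow : ∀ σ, c₀ < σ → σ ≤ n - 2 → ∀ t, Sq m n t → OnDiag m n σ t → TravelsNorth m n l t :=
    fun σ hc₀σ hσ => hnorth σ (by omega) (by omega) fun hσE =>
      Nat.findGreatest_is_greatest hc₀σ hσ ⟨by omega, hσE⟩
  have hhigh : ∀ t < u₀, DiagTravelsEast m n l (n - 1 + t) := fun t ht =>
    not_not.mp (Nat.find_min hex ht)
  refine not_pinwheel (m := m) (n := n) (c := c₀) (u := u₀) hl.2.1 (by omega) (by omega)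
    ?_ ?_ ?_ ?_ ?_ ?_
  · exact hc₀E (m - 1, n - 2 - c₀) ⟨by omega, by omega⟩ (by unfold OnDiag; omega)
  · exact fun y hy => hlow (n - 2 - y) (by omega) (by omega) (m - 1, y) ⟨by omega, by omega⟩
      (by unfold OnDiag; omega)
  · exact fun y hc₀y hy => hlow y hc₀y (by omega) (0, y) ⟨by omega, by omega⟩
      (by unfold OnDiag; omega)
  · exact fun x hx hx' => hhigh (m - 2 - x) (by omega) (x, 0) ⟨by omega, by omega⟩
      (by unfold OnDiag; omega)
  · exact fun x hx => hhigh x hx (x, n - 1) ⟨by omega, by omega⟩ (by unfold OnDiag; omega)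
  · exact hnorth (n - 1 + u₀) (by omega) (by omega) (Nat.find_spec hex) (u₀, n - 1)
      ⟨by omega, by omega⟩ (by unfold OnDiag; omega)

end Path

theorem canGoEast_general (m n a b : ℕ) (hnm : n ≤ m)
    (habsum : a + b = m + n - 3)
    (l : List (ℕ × ℕ)) (τ : ℕ × ℕ) (hl : IsHamPath m n l) (hτ : l.getLast? = some τ)
    (hterm : τ.1 + τ.2 = a ∨ τ.1 + τ.2 = b)
    (i j : ℕ) (hijsum : i + j = m + n - 3) (hinner : a < i)
    (heast : ∀ s, Sq m n s → (s.1 + s.2 = i ∨ s.1 + s.2 = j) → TravelsEast m n l s) :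
    (n - 1 ≤ i ∧ j ≤ m - 2) ∨
    (∀ i' j', i' ≤ j' → i' + j' = m + n - 3 → a < i' →
      ∀ s, Sq m n s → (s.1 + s.2 = i' ∨ s.1 + s.2 = j') → TravelsEast m n l s) := by
  by_cases hrow : n - 1 ≤ i ∧ j ≤ m - 2
  · exact Or.inl hrow
  refine Or.inr fun i' j' hij' hsum' hinner' s hs hsD => ?_
  have hτa : OnDiag m n a τ := by unfold OnDiag; omega
  have hiE : DiagTravelsEast m n l i := fun t ht hti => heast t ht (by unfold OnDiag at hti; omega)
  exact diagTravelsEast_of_diagTravelsEast_low hl hτ hτa hnm (c := i) (by omega) hinner hiE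
    (u := j' - (n - 1)) (by omega) s hs (by unfold OnDiag; omega)

theorem canGoEast (m n a b : ℕ) (hnm : n ≤ m) (hn : 1 ≤ n)
    (hab : a ≤ b) (habsum : a + b = m + n - 3)
    (l : List (ℕ × ℕ)) (τ : ℕ × ℕ) (hl : IsHamPath m n l) (hτ : l.getLast? = some τ)
    (hterm : τ.1 + τ.2 = a ∨ τ.1 + τ.2 = b)
    (i j : ℕ) (hij : i ≤ j) (hijsum : i + j = m + n - 3) (hinner : a < i)
    (heast : ∀ s, Sq m n s → (s.1 + s.2 = i ∨ s.1 + s.2 = j) → TravelsEast m n l s) :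
    (n - 1 ≤ i ∧ j ≤ m - 2) ∨
    (∀ i' j', i' ≤ j' → i' + j' = m + n - 3 → a < i' →
      ∀ s, Sq m n s → (s.1 + s.2 = i' ∨ s.1 + s.2 = j') → TravelsEast m n l s) :=
  canGoEast_general m n a b hnm habsum l τ hl hτ hterm i j hijsum hinner heast

end ProjBoard
end
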